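/- In the explicit FRW shock-data setting, assume in addition σ̄ > 0, γ = σ̄/(2π𝒢(1 + 6σ̄ + σ̄²)), and 1 + 3σ > 0. Then the shock surface is lightlike, i.e. r'(t)² = 1/R(t)² for all t ∈ I (the k = 0 lightlike condition ṙ² = (1 − kr²)/R²), if and only if (1 + 3σ)²·σ̄ = 1 + 6σ̄ + σ̄² (i.e. the Minkowski-frame shock speed (1 + 3σ)·√(σ̄/(1 + 6σ̄ + σ̄²)) equals 1). -/

import Mathlib

open Real

/-- Explicit FRW shock position in barred coordinates:
`r̄(t) = √(18π𝒢γ)(1+σ)(t − t₀) + r̄₀`. -/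
noncomputable def rbarF (𝒢 γ σ t₀ rb₀ : ℝ) (t : ℝ) : ℝ :=
  Real.sqrt (18 * π * 𝒢 * γ) * (1 + σ) * (t - t₀) + rb₀

/-- Explicit FRW cosmological scale factor: `R(t) = R₀ (r̄(t)/r̄₀)^{2/(3(1+σ))}`. -/
noncomputable def RF (𝒢 γ σ t₀ rb₀ R₀ : ℝ) (t : ℝ) : ℝ :=
  R₀ * (rbarF 𝒢 γ σ t₀ rb₀ t / rb₀) ^ (2 / (3 * (1 + σ)))

/-- Shock position in unbarred FRW coordinates: `r(t) = r̄(t)/R(t)`. -/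
noncomputable def rF (𝒢 γ σ t₀ rb₀ R₀ : ℝ) (t : ℝ) : ℝ :=
  rbarF 𝒢 γ σ t₀ rb₀ t / RF 𝒢 γ σ t₀ rb₀ R₀ t

/-!
Along the shock `r = r̄₀^p r̄^(1-p) / R₀` with `p = 2/(3(1+σ))` and `r̄` affine of slope
`c = √(18π𝒢γ)(1+σ)`, so `ṙ R = (1-p) c` is constant. The lightlike condition therefore reduces to
`((1-p) c)² = 1`, and `((1-p) c)² = 2π𝒢γ(1+3σ)² = (1+3σ)² σ̄ / (1+6σ̄+σ̄²)`.
-/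

/-- For `u > 0`, `u / (R₀ (u/u₀)^p) = (u₀^p / R₀) u^(1-p)`, whence the factor `1 - p`. -/
theorem HasDerivAt.div_const_mul_div_rpow {u : ℝ → ℝ} {c u₀ R₀ p t : ℝ} (hu : HasDerivAt u c t)
    (ht : 0 < u t / u₀) (hR₀ : R₀ ≠ 0) :
    HasDerivAt (fun s => u s / (R₀ * (u s / u₀) ^ p)) ((1 - p) * c / (R₀ * (u t / u₀) ^ p)) t := by
  have hu₀ : u₀ ≠ 0 := by rintro rfl; simp at ht
  have hut : u t ≠ 0 := by rintro h; simp [h] at ht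
  have hpow : (u t / u₀) ^ p ≠ 0 := (rpow_pos_of_pos ht p).ne'
  have hR : HasDerivAt (fun s => R₀ * (u s / u₀) ^ p) (R₀ * (c / u₀ * p * (u t / u₀) ^ (p - 1))) t :=
    ((hu.div_const u₀).rpow_const (Or.inl ht.ne')).const_mul R₀
  refine (hu.div hR (mul_ne_zero hR₀ hpow)).congr_deriv ?_
  rw [rpow_sub_one ht.ne']
  field_simp

theorem hasDerivAt_rbarF (𝒢 γ σ t₀ rb₀ t : ℝ) :
    HasDerivAt (rbarF 𝒢 γ σ t₀ rb₀) (√(18 * π * 𝒢 * γ) * (1 + σ)) t :=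
  ((((hasDerivAt_id t).sub_const t₀).const_mul _).add_const rb₀).congr_deriv (mul_one _)

theorem RF_pos {𝒢 γ σ t₀ rb₀ R₀ t : ℝ} (hrb₀ : 0 < rb₀) (hR₀ : 0 < R₀)
    (ht : 0 < rbarF 𝒢 γ σ t₀ rb₀ t) : 0 < RF 𝒢 γ σ t₀ rb₀ R₀ t :=
  mul_pos hR₀ (rpow_pos_of_pos (div_pos ht hrb₀) _)

/-- The product `ṙ R` along the shock, `(1 - p) c` in the notation above. -/
noncomputable def shockSpeed (𝒢 γ σ : ℝ) : ℝ :=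
  (1 - 2 / (3 * (1 + σ))) * (√(18 * π * 𝒢 * γ) * (1 + σ))

theorem deriv_rF {𝒢 γ σ t₀ rb₀ R₀ t : ℝ} (hrb₀ : 0 < rb₀) (hR₀ : 0 < R₀)
    (ht : 0 < rbarF 𝒢 γ σ t₀ rb₀ t) :
    deriv (rF 𝒢 γ σ t₀ rb₀ R₀) t = shockSpeed 𝒢 γ σ / RF 𝒢 γ σ t₀ rb₀ R₀ t :=
  ((hasDerivAt_rbarF 𝒢 γ σ t₀ rb₀ t).div_const_mul_div_rpow (div_pos ht hrb₀) hR₀.ne').deriv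

/-- Since `ṙ R` is constant, the lightlike condition holds on `I` iff it holds at `t₀ ∈ I`. -/
theorem lightlike_iff {𝒢 γ σ t₀ rb₀ R₀ : ℝ} (hrb₀ : 0 < rb₀) (hR₀ : 0 < R₀) :
    (∀ t : ℝ, 0 < rbarF 𝒢 γ σ t₀ rb₀ t →
        deriv (rF 𝒢 γ σ t₀ rb₀ R₀) t ^ 2 = 1 / RF 𝒢 γ σ t₀ rb₀ R₀ t ^ 2) ↔
      shockSpeed 𝒢 γ σ ^ 2 = 1 := by
  have key : ∀ t, 0 < rbarF 𝒢 γ σ t₀ rb₀ t →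
      (deriv (rF 𝒢 γ σ t₀ rb₀ R₀) t ^ 2 = 1 / RF 𝒢 γ σ t₀ rb₀ R₀ t ^ 2 ↔
        shockSpeed 𝒢 γ σ ^ 2 = 1) := by
    intro t ht
    rw [deriv_rF hrb₀ hR₀ ht, div_pow,
      div_left_inj' (pow_ne_zero 2 (RF_pos hrb₀ hR₀ ht).ne')]
  have ht₀ : 0 < rbarF 𝒢 γ σ t₀ rb₀ t₀ := by simpa [rbarF] using hrb₀
  exact ⟨fun h => (key t₀ ht₀).1 (h t₀ ht₀), fun h t ht => (key t ht).2 h⟩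

theorem shockSpeed_sq {𝒢 γ σ : ℝ} (hσ : 1 + σ ≠ 0) (h𝒢γ : 0 ≤ 𝒢 * γ) :
    shockSpeed 𝒢 γ σ ^ 2 = 2 * π * 𝒢 * γ * (1 + 3 * σ) ^ 2 := by
  have h18 : 0 ≤ 18 * π * 𝒢 * γ := by rw [mul_assoc]; positivity
  rw [shockSpeed, mul_pow, mul_pow, sq_sqrt h18]
  field_simp
  ring

theorem stmt_16_general (𝒢 γ σ σb t₀ rb₀ R₀ : ℝ) (h𝒢 : 0 < 𝒢) (hγ : 0 < γ) (hσ : 0 < 1 + σ)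
    (hrb₀ : 0 < rb₀) (hR₀ : 0 < R₀) (hσb : 0 < σb)
    (hγσb : γ = σb / (2 * π * 𝒢 * (1 + 6 * σb + σb ^ 2))) :
    (∀ t : ℝ, 0 < rbarF 𝒢 γ σ t₀ rb₀ t →
        deriv (rF 𝒢 γ σ t₀ rb₀ R₀) t ^ 2 = 1 / RF 𝒢 γ σ t₀ rb₀ R₀ t ^ 2) ↔
      (1 + 3 * σ) ^ 2 * σb = 1 + 6 * σb + σb ^ 2 := by
  have hD : 0 < 1 + 6 * σb + σb ^ 2 := by positivity
  have h2π𝒢γ : 2 * π * 𝒢 * γ = σb / (1 + 6 * σb + σb ^ 2) := by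
    rw [hγσb]; field_simp
  rw [lightlike_iff hrb₀ hR₀, shockSpeed_sq hσ.ne' (mul_pos h𝒢 hγ).le, h2π𝒢γ, div_mul_eq_mul_div,
    div_eq_one_iff_eq hD.ne', mul_comm]

/-- with `γ = σ̄/(2π𝒢(1+6σ̄+σ̄²))` and `1 + 3σ > 0`, the shock surface
is lightlike (`r'(t)² = 1/R(t)²` for all `t` with `r̄(t) > 0`, the `k = 0` lightlike
condition) iff `(1+3σ)²σ̄ = 1 + 6σ̄ + σ̄²`, i.e. iff the Minkowski-frame shock speed
`(1+3σ)√(σ̄/(1+6σ̄+σ̄²))` equals 1. -/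
theorem stmt_16 (𝒢 γ σ σb t₀ rb₀ R₀ : ℝ) (h𝒢 : 0 < 𝒢) (hγ : 0 < γ) (hσ : 0 < 1 + σ)
    (hrb₀ : 0 < rb₀) (hR₀ : 0 < R₀) (hσb : 0 < σb)
    (hγσb : γ = σb / (2 * π * 𝒢 * (1 + 6 * σb + σb ^ 2)))
    (h3σ : 0 < 1 + 3 * σ) :
    (∀ t : ℝ, 0 < rbarF 𝒢 γ σ t₀ rb₀ t →
        deriv (rF 𝒢 γ σ t₀ rb₀ R₀) t ^ 2 = 1 / RF 𝒢 γ σ t₀ rb₀ R₀ t ^ 2) ↔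
      (1 + 3 * σ) ^ 2 * σb = 1 + 6 * σb + σb ^ 2 :=
  stmt_16_general 𝒢 γ σ σb t₀ rb₀ R₀ h𝒢 hγ hσ hrb₀ hR₀ hσb hγσb
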